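/- Let n ≥ 1 and let x, y, z, w ∈ (ℤ/2)ⁿ. Then the system of equations [x_p + y_p + z_p + w_p = 0 for every p ∈ {1,…,n}] and [x_p x_q + y_p y_q + z_p z_q + w_p w_q = 0 for every p < q in {1,…,n}] (all equations in ℤ/2) holds if and only if (x = y and z = w) or (x = z and y = w) or (x = w and y = z). -/
import Mathlib

lemma zmod2_double (a b : ZMod 2) : a + a + b + b = 0 := by revert a b; decide

lemma zmod2_d2 (a b : ZMod 2) : a + b + a + b = 0 := by revert a b; decide

lemma zmod2_d3 (a b : ZMod 2) : a + b + b + a = 0 := by revert a b; decide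

lemma zmod2_lin (a c d : ZMod 2) (h : a + a + c + d = 0) : c = d := by revert a c d; decide

lemma zmod2_lin' (a c d : ZMod 2) (h : a + c + a + d = 0) : c = d := by revert a c d; decide

lemma zmod2_lin3 (a c d : ZMod 2) (h : a + c + c + d = 0) : a = d := by revert a c d; decide

lemma zmod2_neq (a b : ZMod 2) (h : a ≠ b) : a + b = 1 := by revert a b; decide

lemma zmod2_key (a b c d e f g h' : ZMod 2)
    (h1 : a + b + c + d = 0) (h2 : e + f + g + h' = 0)
    (h3 : a * e + b * f + c * g + d * h' = 0) :
    (a + b) * (e + g) = (e + f) * (a + c) := by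
  revert a b c d e f g h'; decide

lemma zmod2_mul_one (a b : ZMod 2) (h : a * b = 1) : a = 1 ∧ b = 1 := by revert a b; decide

/-- for vectors `x, y, z, w ∈ (ℤ/2)ⁿ`, the system
`x_p + y_p + z_p + w_p = 0` (all `p`) and
`x_p x_q + y_p y_q + z_p z_q + w_p w_q = 0` (all `p < q`)
holds iff the four vectors pair up as `(x=y ∧ z=w) ∨ (x=z ∧ y=w) ∨ (x=w ∧ y=z)`. -/
theorem second_moment_pairing (n : ℕ) (hn : 1 ≤ n) (x y z w : Fin n → ZMod 2) :
    ((∀ p : Fin n, x p + y p + z p + w p = 0) ∧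
      (∀ p q : Fin n, p < q →
        x p * x q + y p * y q + z p * z q + w p * w q = 0)) ↔
      ((x = y ∧ z = w) ∨ (x = z ∧ y = w) ∨ (x = w ∧ y = z)) := by
  constructor
  · rintro ⟨h1, h2⟩
    have key : ∀ p q : Fin n,
        (x p + y p) * (x q + z q) = (x q + y q) * (x p + z p) := by
      intro p q
      rcases lt_trichotomy p q with hpq | rfl | hqp
      · exact zmod2_key _ _ _ _ _ _ _ _ (h1 p) (h1 q) (h2 p q hpq)
      · rfl
      · exact (zmod2_key _ _ _ _ _ _ _ _ (h1 q) (h1 p) (h2 q p hqp)).symm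
    by_cases hxy : x = y
    · subst hxy
      exact Or.inl ⟨rfl, funext fun p => zmod2_lin _ _ _ (h1 p)⟩
    · obtain ⟨p, hp⟩ := Function.ne_iff.mp hxy
      have hap : x p + y p = 1 := zmod2_neq _ _ hp
      by_cases hxz : x = z
      · subst hxz
        exact Or.inr (Or.inl ⟨rfl, funext fun r => zmod2_lin' _ _ _ (h1 r)⟩)
      · obtain ⟨q, hq⟩ := Function.ne_iff.mp hxz
        have hbq : x q + z q = 1 := zmod2_neq _ _ hq
        have h1' := key p q
        rw [hap, hbq, one_mul] at h1'
        obtain ⟨haq, hbp⟩ := zmod2_mul_one _ _ h1'.symm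
        have hyz : y = z := by
          funext r
          have hr := key p r
          rw [hap, hbp, one_mul, mul_one] at hr
          exact (add_left_cancel hr).symm
        subst hyz
        exact Or.inr (Or.inr ⟨funext fun r => zmod2_lin3 _ _ _ (h1 r), rfl⟩)
  · rintro (⟨rfl, rfl⟩ | ⟨rfl, rfl⟩ | ⟨rfl, rfl⟩)
    · exact ⟨fun p => zmod2_double _ _, fun p q _ => zmod2_double _ _⟩
    · exact ⟨fun p => zmod2_d2 _ _, fun p q _ => zmod2_d2 _ _⟩
    · exact ⟨fun p => zmod2_d3 _ _, fun p q _ => zmod2_d3 _ _⟩
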